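/- Let Z₁, …, Z_n be i.i.d. random variables with common distribution G on a measurable space 𝒵, let ξ : 𝒵 → ℝ be measurable with mean m := E_G[ξ] and variance σ² := Var_G(ξ) ∈ (0,∞), and let Δ := sup_{t ∈ ℝ} |P((∑ᵢ ξ(Zᵢ) − n·m)/(√n·σ) ≤ t) − Φ(t)|. Let σ̂ ≥ 0 be any random variable defined on the same probability space, and let z ≥ 0 and η ≥ 0 be real numbers. Then |P(∑_{i=1}^n ξ(Zᵢ) > √n·z·σ̂) − (1 − Φ(z − √n·m/σ))| ≤ Δ + P(|σ̂ − σ| > η·σ) + η·z/√(2π). -/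

import Mathlib

open MeasureTheory Real ProbabilityTheory

/-!
Write `T = (∑ ξ(Zᵢ) − n m)/(√n σ)` and `t₀ = z − √n m/σ`. Off the event `|σ̂ − σ| > ησ`, the
miscoverage event `√n z σ̂ < ∑ ξ(Zᵢ)` lies between `{T > t₀ + ηz}` and `{T > t₀ − ηz}`.
The probabilities of these two events are within `Δ` of `1 − Φ(t₀ ± ηz)`, and `Φ` is
`1/√(2π)`-Lipschitz because the Gaussian density is bounded by `1/√(2π)`.
-/

/-- The standard normal cumulative distribution function. -/
noncomputable def Phi (t : ℝ) : ℝ :=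
  (Real.sqrt (2 * Real.pi))⁻¹ * ∫ x in Set.Iic t, Real.exp (-x ^ 2 / 2)

lemma integrable_exp_neg_sq_div_two : Integrable fun x : ℝ => exp (-x ^ 2 / 2) := by
  convert integrable_exp_neg_mul_sq (show (0 : ℝ) < 1 / 2 by norm_num) using 3 with x
  ring

lemma Phi_sub_Phi_le {a b : ℝ} (hab : a ≤ b) : Phi b - Phi a ≤ (b - a) / √(2 * π) := by
  have hint := integrable_exp_neg_sq_div_two
  have hdiff : Phi b - Phi a = (√(2 * π))⁻¹ * ∫ x in a..b, exp (-x ^ 2 / 2) := by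
    rw [Phi, Phi, ← mul_sub,
      intervalIntegral.integral_Iic_sub_Iic hint.integrableOn hint.integrableOn]
  have hdensity_le_one : ∫ x in a..b, exp (-x ^ 2 / 2) ≤ ∫ _ in a..b, (1 : ℝ) :=
    intervalIntegral.integral_mono_on hab hint.intervalIntegrable intervalIntegrable_const
      fun x _ => exp_le_one_iff.mpr (by nlinarith [sq_nonneg x])
  rw [intervalIntegral.integral_const, smul_eq_mul, mul_one] at hdensity_le_one
  rw [hdiff, div_eq_inv_mul]
  gcongr

lemma abs_measureReal_sub_one_sub_Phi_le {Ω : Type*} [MeasurableSpace Ω] {μ : Measure Ω}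
    [IsProbabilityMeasure μ] {T : Ω → ℝ} (hT : Measurable T) {Δ : ℝ}
    (hΔ : ∀ t, |μ.real {ω | T ω ≤ t} - Phi t| ≤ Δ) {A B : Set Ω} {t δ : ℝ} (hδ : 0 ≤ δ)
    (hA_subset : A ⊆ {ω | t - δ < T ω} ∪ B) (hsubset_A : {ω | t + δ < T ω} ⊆ A ∪ B) :
    |μ.real A - (1 - Phi t)| ≤ Δ + μ.real B + δ / √(2 * π) := by
  have htail (s : ℝ) : μ.real {ω | s < T ω} = 1 - μ.real {ω | T ω ≤ s} := by
    simpa only [Set.compl_ofPred, not_le] using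
      probReal_compl_eq_one_sub (μ := μ) (measurableSet_le hT measurable_const)
  have hupper : μ.real A ≤ μ.real {ω | t - δ < T ω} + μ.real B :=
    (measureReal_mono hA_subset).trans (measureReal_union_le _ _)
  have hlower : μ.real {ω | t + δ < T ω} ≤ μ.real A + μ.real B :=
    (measureReal_mono hsubset_A).trans (measureReal_union_le _ _)
  have hΦ_left := Phi_sub_Phi_le (show t - δ ≤ t by linarith)
  have hΦ_right := Phi_sub_Phi_le (show t ≤ t + δ by linarith)
  rw [sub_sub_cancel] at hΦ_left
  rw [add_sub_cancel_left] at hΦ_right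
  rw [htail] at hupper hlower
  have hleft := abs_le.mp (hΔ (t - δ))
  have hright := abs_le.mp (hΔ (t + δ))
  rw [abs_le]
  constructor <;> linarith

lemma lt_standardize_iff {n σ : ℝ} (hn : 0 < n) (hσ : 0 < σ) (a m S : ℝ) :
    a - √n * m / σ < (S - n * m) / (√n * σ) ↔ √n * σ * a < S := by
  rw [lt_div_iff₀ (by positivity)]
  have hexpand : (a - √n * m / σ) * (√n * σ) = √n * σ * a - n * m := by
    field_simp
    linear_combination -m * mul_self_sqrt hn.le
  rw [hexpand, sub_lt_sub_iff_right]

theorem studentized_universal_inference_miscoverage_nonasymptotic_general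
    {𝒵 : Type*} [MeasurableSpace 𝒵] (G : Measure 𝒵) [IsProbabilityMeasure G]
    (n : ℕ) (hn : 0 < n)
    (ξ : 𝒵 → ℝ) (hξ : Measurable ξ)
    (m σ : ℝ)
    (hσpos : 0 < σ)
    (Δ : ℝ)
    (hΔ : ∀ t : ℝ, |((Measure.pi fun _ : Fin n => G)
        {ω | ((∑ i, ξ (ω i)) - n * m) / (Real.sqrt n * σ) ≤ t}).toReal - Phi t| ≤ Δ)
    (σhat : (Fin n → 𝒵) → ℝ)
    (z η : ℝ) (hz : 0 ≤ z) (hη : 0 ≤ η) :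
    |((Measure.pi fun _ : Fin n => G)
          {ω | Real.sqrt n * z * σhat ω < ∑ i, ξ (ω i)}).toReal
        - (1 - Phi (z - Real.sqrt n * m / σ))| ≤
      Δ + ((Measure.pi fun _ : Fin n => G) {ω | η * σ < |σhat ω - σ|}).toReal
        + η * z / Real.sqrt (2 * Real.pi) := by
  have hn' : (0 : ℝ) < n := Nat.cast_pos.mpr hn
  have hT : Measurable fun ω : Fin n → 𝒵 => ((∑ i, ξ (ω i)) - n * m) / (√n * σ) := by
    fun_prop
  refine abs_measureReal_sub_one_sub_Phi_le hT hΔ (mul_nonneg hη hz) ?_ ?_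
  · intro ω hω
    by_cases hB : η * σ < |σhat ω - σ|
    · exact Or.inr hB
    refine Or.inl ?_
    have hσhat : σ - η * σ ≤ σhat ω := by linarith [(abs_le.mp (not_lt.mp hB)).1]
    rw [Set.mem_ofPred_eq, sub_right_comm, lt_standardize_iff hn' hσpos]
    calc √n * σ * (z - η * z) = √n * z * (σ - η * σ) := by ring
      _ ≤ √n * z * σhat ω := by gcongr
      _ < ∑ i, ξ (ω i) := hω
  · intro ω hω
    by_cases hB : η * σ < |σhat ω - σ|
    · exact Or.inr hB
    refine Or.inl ?_
    have hσhat : σhat ω ≤ σ + η * σ := by linarith [(abs_le.mp (not_lt.mp hB)).2]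
    rw [Set.mem_ofPred_eq, sub_add_eq_add_sub, lt_standardize_iff hn' hσpos] at hω
    calc √n * z * σhat ω ≤ √n * z * (σ + η * σ) := by gcongr
      _ = √n * σ * (z + η * z) := by ring
      _ < ∑ i, ξ (ω i) := hω

/-- Nonasymptotic conditional form underlying Theorem 3: the studentized universal
confidence set's miscoverage equals `1 − Φ(z − √n m/σ)` up to the Berry–Esseen error `Δ`,
the studentization error probability, and a Gaussian-Lipschitz remainder. The i.i.d. sample
`Z₁,…,Z_n ∼ G` is modelled by the product measure `Measure.pi (fun _ : Fin n => G)`. -/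
theorem studentized_universal_inference_miscoverage_nonasymptotic
    {𝒵 : Type*} [MeasurableSpace 𝒵] (G : Measure 𝒵) [IsProbabilityMeasure G]
    (n : ℕ) (hn : 0 < n)
    (ξ : 𝒵 → ℝ) (hξ : Measurable ξ)
    (m σ : ℝ) (hm : m = ∫ z, ξ z ∂G)
    (hξ2 : Integrable (fun z => (ξ z) ^ 2) G)
    (hσ : σ ^ 2 = variance ξ G) (hσpos : 0 < σ)
    (Δ : ℝ)
    (hΔ : ∀ t : ℝ, |((Measure.pi fun _ : Fin n => G)
        {ω | ((∑ i, ξ (ω i)) - n * m) / (Real.sqrt n * σ) ≤ t}).toReal - Phi t| ≤ Δ)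
    (σhat : (Fin n → 𝒵) → ℝ) (hσhat : Measurable σhat) (hσhat0 : ∀ ω, 0 ≤ σhat ω)
    (z η : ℝ) (hz : 0 ≤ z) (hη : 0 ≤ η) :
    |((Measure.pi fun _ : Fin n => G)
          {ω | Real.sqrt n * z * σhat ω < ∑ i, ξ (ω i)}).toReal
        - (1 - Phi (z - Real.sqrt n * m / σ))| ≤
      Δ + ((Measure.pi fun _ : Fin n => G) {ω | η * σ < |σhat ω - σ|}).toReal
        + η * z / Real.sqrt (2 * Real.pi) :=
  studentized_universal_inference_miscoverage_nonasymptotic_general G n hn ξ hξ m σ hσpos Δ hΔ σhat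
    z η hz hη
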